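/- arXiv:2006.09095 — 3 statements merged into one kernel-verified Lean document; each statement's English description precedes it below -/
import Mathlib

section
/- Let 𝓕 be a family of transcendental entire functions (with D = ℂ) whose Julia like set J(𝓕) is nonempty and backward invariant, i.e. f⁻¹(J(𝓕)) ⊆ J(𝓕) for every f ∈ 𝓕. Then J(𝓕) is either a singleton or an infinite set. -/
open Filter Topology Set

/-- Locally uniform divergence to `∞` on the set `s`: on every compact subset of `s`,
the moduli eventually exceed every bound, uniformly. -/
def TendstoLocallyUniformlyOnInfty (F : ℕ → ℂ → ℂ) (s : Set ℂ) : Prop :=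
  ∀ K ⊆ s, IsCompact K → ∀ M : ℝ, ∀ᶠ n in Filter.atTop, ∀ z ∈ K, M ≤ ‖F n z‖

/-- The family `𝓕` of functions holomorphic on `D` is normal at `z₀ ∈ D`: there is a
neighborhood `N ⊆ D` of `z₀` on which every sequence from `𝓕` has a subsequence converging
locally uniformly either to a holomorphic function or to `∞`. -/
def NormalAt (D : Set ℂ) (𝓕 : Set (ℂ → ℂ)) (z₀ : ℂ) : Prop :=
  ∃ N, N ⊆ D ∧ N ∈ 𝓝 z₀ ∧ ∀ f : ℕ → ℂ → ℂ, (∀ n, f n ∈ 𝓕) →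
    ∃ φ : ℕ → ℕ, StrictMono φ ∧
      ((∃ g : ℂ → ℂ, DifferentiableOn ℂ g N ∧
          TendstoLocallyUniformlyOn (fun n => f (φ n)) g Filter.atTop N) ∨
        TendstoLocallyUniformlyOnInfty (fun n => f (φ n)) N)

/-- The Fatou like set of `𝓕` on `D`: points of `D` where `𝓕` is normal. -/
def FatouSet (D : Set ℂ) (𝓕 : Set (ℂ → ℂ)) : Set ℂ := {z | z ∈ D ∧ NormalAt D 𝓕 z}

/-- The Julia like set of `𝓕` on `D`. -/
def JuliaSet (D : Set ℂ) (𝓕 : Set (ℂ → ℂ)) : Set ℂ := D \ FatouSet D 𝓕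

/-- The backward orbit of `z` with respect to `𝓕`. -/
def BackwardOrbit (D : Set ℂ) (𝓕 : Set (ℂ → ℂ)) (z : ℂ) : Set ℂ :=
  {w | w ∈ D ∧ ∃ f ∈ 𝓕, f w = z}

/-- The exceptional set of `𝓕`: points with finite backward orbit. -/
def ExceptionalSet (D : Set ℂ) (𝓕 : Set (ℂ → ℂ)) : Set ℂ :=
  {z | (BackwardOrbit D 𝓕 z).Finite}

/-- The escaping like set `I(𝓕)`: points `z ∈ D` such that `f n z → ∞` for every
infinite (i.e. injective) sequence `f` in `𝓕`. -/
def EscapingSet (D : Set ℂ) (𝓕 : Set (ℂ → ℂ)) : Set ℂ :=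
  {z | z ∈ D ∧ ∀ f : ℕ → ℂ → ℂ, (∀ n, f n ∈ 𝓕) → Function.Injective f →
    Filter.Tendsto (fun n => ‖f n z‖) Filter.atTop Filter.atTop}

/-- The generalized escaping like set `U(𝓕)`: points `z ∈ D` such that `f n z → ∞` for some
sequence `f` in `𝓕`. -/
def GenEscapingSet (D : Set ℂ) (𝓕 : Set (ℂ → ℂ)) : Set ℂ :=
  {z | z ∈ D ∧ ∃ f : ℕ → ℂ → ℂ, (∀ n, f n ∈ 𝓕) ∧
    Filter.Tendsto (fun n => ‖f n z‖) Filter.atTop Filter.atTop}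

/-- A transcendental entire function: entire and not a polynomial. -/
def TranscendentalEntire (f : ℂ → ℂ) : Prop :=
  Differentiable ℂ f ∧ ¬ ∃ p : Polynomial ℂ, ∀ z, f z = p.eval z

/-- Boundary of `A` relative to `D`; for `D` open and `A ⊆ D` this coincides with the
boundary of `A` in the subspace topology of `D`. -/
def relBoundary (D A : Set ℂ) : Set ℂ := D ∩ frontier A

/-- Closure of `A` in `D`; for `D` open and `A ⊆ D` this coincides with the closure of `A`
in the subspace topology of `D`. -/
def relClosure (D A : Set ℂ) : Set ℂ := D ∩ closure A


/-!
Suppose `J = J(𝓕)` is finite with at least two points and let `a ∈ J`. Since `a` is isolated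
in `J`, a small circle `S` around `a` lies in the Fatou set. Compactness of `S` gives, for any
sequence from `𝓕`, a subsequence that on each of finitely many discs covering `S` is either
uniformly Cauchy or uniformly divergent, and since `S` is connected the same alternative holds on
all of `S`. In the Cauchy case the maximum principle propagates uniform convergence from `S` to the
disc it bounds. In the divergent case backward invariance is used: for `f ∈ 𝓕` pick `d ∈ J` with
`d ≠ f a`; then `f` omits `d` on the closed disc, since a preimage of `d` there would lie in `J`,
hence be `a`. The minimum principle applied to `f - d` propagates divergence inward. Thus `𝓕` is
normal at `a`, contradicting `a ∈ J`.
-/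

open Metric Bornology

section UniformDivergence

variable {ι α E : Type*} [Norm E]

def TendstoUniformlyOnInfty (F : ι → α → E) (l : Filter ι) (s : Set α) : Prop :=
  ∀ M : ℝ, ∀ᶠ n in l, ∀ z ∈ s, M ≤ ‖F n z‖

variable {F : ι → α → E} {l : Filter ι} {s t : Set α}

lemma TendstoUniformlyOnInfty.mono (h : TendstoUniformlyOnInfty F l s) (hts : t ⊆ s) :
    TendstoUniformlyOnInfty F l t :=
  fun M => (h M).mono fun _ hn z hz => hn z (hts hz)

lemma TendstoUniformlyOnInfty.comp_tendsto {ι' : Type*} {l' : Filter ι'} {φ : ι' → ι}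
    (h : TendstoUniformlyOnInfty F l s) (hφ : Tendsto φ l' l) :
    TendstoUniformlyOnInfty (fun n => F (φ n)) l' s :=
  fun M => hφ.eventually (h M)

lemma tendstoUniformlyOnInfty_biUnion {κ : Type*} {T : Finset κ} {s : κ → Set α}
    (h : ∀ i ∈ T, TendstoUniformlyOnInfty F l (s i)) :
    TendstoUniformlyOnInfty F l (⋃ i ∈ T, s i) := fun M =>
  ((eventually_all_finset T).2 fun i hi => h i hi M).mono fun _ hn z hz => by
    obtain ⟨i, hi, hz⟩ := mem_iUnion₂.1 hz
    exact hn i hi z hz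

end UniformDivergence

section UniformCauchy

variable {ι α β : Type*} [UniformSpace β] {F : ι → α → β} {l : Filter ι}

lemma UniformCauchySeqOn.comp_tendsto {ι' : Type*} {l' : Filter ι'} {φ : ι' → ι} {s : Set α}
    (h : UniformCauchySeqOn F l s) (hφ : Tendsto φ l' l) :
    UniformCauchySeqOn (fun n => F (φ n)) l' s :=
  fun u hu => (hφ.prodMap hφ).eventually (h u hu)

lemma uniformCauchySeqOn_biUnion {κ : Type*} {T : Finset κ} {s : κ → Set α}
    (h : ∀ i ∈ T, UniformCauchySeqOn F l (s i)) :
    UniformCauchySeqOn F l (⋃ i ∈ T, s i) := fun u hu =>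
  ((eventually_all_finset T).2 fun i hi => h i hi u hu).mono fun _ hm z hz => by
    obtain ⟨i, hi, hz⟩ := mem_iUnion₂.1 hz
    exact hm i hi z hz

lemma UniformCauchySeqOn.exists_tendstoUniformlyOn [Nonempty β] [CompleteSpace β] [l.NeBot]
    {s : Set α} (h : UniformCauchySeqOn F l s) : ∃ g, TendstoUniformlyOn F g l s := by
  choose! g hg using fun x (hx : x ∈ s) => CompleteSpace.complete (h.cauchy_map hx)
  exact ⟨g, h.tendstoUniformlyOn_of_tendsto hg⟩

lemma UniformCauchySeqOn.disjoint_of_tendstoUniformlyOnInfty {E : Type*}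
    [SeminormedAddCommGroup E] {F : ℕ → α → E} {s t : Set α} (hs : UniformCauchySeqOn F atTop s)
    (ht : TendstoUniformlyOnInfty F atTop t) : Disjoint s t := by
  refine Set.disjoint_left.2 fun z hzs hzt => ?_
  obtain ⟨C, hC⟩ := (hs.cauchySeq hzs).isBounded_range.exists_norm_le
  obtain ⟨n, hn⟩ := (ht (C + 1)).exists
  linarith [hn z hzt, hC _ (mem_range_self n)]

end UniformCauchy

lemma exists_strictMono_forall_finset {α κ : Type*} {s : Set α} (P : κ → (ℕ → α) → Prop)
    (hP : ∀ i u φ, StrictMono φ → P i u → P i (u ∘ φ)) (T : Finset κ)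
    (h : ∀ i ∈ T, ∀ u : ℕ → α, (∀ n, u n ∈ s) → ∃ φ : ℕ → ℕ, StrictMono φ ∧ P i (u ∘ φ))
    (u : ℕ → α) (hu : ∀ n, u n ∈ s) : ∃ φ : ℕ → ℕ, StrictMono φ ∧ ∀ i ∈ T, P i (u ∘ φ) := by
  classical
  induction T using Finset.induction_on generalizing u with
  | empty => exact ⟨id, strictMono_id, by simp⟩
  | insert i T _ ih =>
    obtain ⟨φ, hφ, hPφ⟩ := h i (Finset.mem_insert_self i T) u hu
    obtain ⟨ψ, hψ, hPψ⟩ :=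
      ih (fun j hj => h j (Finset.mem_insert_of_mem hj)) (u ∘ φ) fun n => hu (φ n)
    refine ⟨φ ∘ ψ, hφ.comp hψ, fun j hj => ?_⟩
    rcases Finset.mem_insert.1 hj with rfl | hj
    · exact hP j _ ψ hψ hPφ
    · exact hPψ j hj

section MaximumPrinciple

variable {E : Type*} [NormedAddCommGroup E] [NormedSpace ℂ E] [Nontrivial E] {U : Set E}

lemma le_norm_of_forall_mem_frontier_le_norm {f : E → ℂ} (hU : IsBounded U)
    (hd : DiffContOnCl ℂ f U) (h₀ : ∀ z ∈ closure U, f z ≠ 0) {C : ℝ} (hC : 0 < C)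
    (hle : ∀ z ∈ frontier U, C ≤ ‖f z‖) {z : E} (hz : z ∈ closure U) : C ≤ ‖f z‖ := by
  have h := Complex.norm_le_of_forall_mem_frontier_norm_le hU (hd.inv h₀) (C := C⁻¹)
    (fun y hy => by simpa only [Pi.inv_apply, norm_inv] using inv_anti₀ hC (hle y hy)) hz
  rw [Pi.inv_apply, norm_inv] at h
  exact (inv_le_inv₀ (norm_pos_iff.2 (h₀ z hz)) hC).1 h

lemma UniformCauchySeqOn.closure_of_frontier {ι G : Type*} [SemilatticeSup ι] [Nonempty ι]
    [NormedAddCommGroup G] [NormedSpace ℂ G] {F : ι → E → G} (hU : IsBounded U)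
    (hF : ∀ n, DiffContOnCl ℂ (F n) U) (h : UniformCauchySeqOn F atTop (frontier U)) :
    UniformCauchySeqOn F atTop (closure U) := by
  rw [Metric.uniformCauchySeqOn_iff] at h ⊢
  intro ε hε
  obtain ⟨N, hN⟩ := h (ε / 2) (half_pos hε)
  refine ⟨N, fun m hm n hn z hz => ?_⟩
  have hmax := Complex.norm_le_of_forall_mem_frontier_norm_le hU ((hF m).sub (hF n))
    (fun y hy => (dist_eq_norm (F m y) (F n y) ▸ hN m hm n hn y hy).le) hz
  rw [dist_eq_norm]
  exact hmax.trans_lt (half_lt_self hε)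

lemma TendstoUniformlyOnInfty.closure_of_frontier {ι : Type*} {l : Filter ι} {F : ι → E → ℂ}
    {B : Set ℂ} (hU : IsBounded U) (hF : ∀ n, DiffContOnCl ℂ (F n) U) (hB : IsBounded B)
    (homit : ∀ n, ∃ d ∈ B, ∀ z ∈ closure U, F n z ≠ d)
    (h : TendstoUniformlyOnInfty F l (frontier U)) :
    TendstoUniformlyOnInfty F l (closure U) := by
  obtain ⟨R, hR⟩ := hB.exists_norm_le
  choose d hdB hd using homit
  intro M
  have hC : 0 < max M 1 + |R| := by linarith [le_max_right M 1, abs_nonneg R]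
  filter_upwards [h (max M 1 + 2 * |R|)] with n hn z hz
  have hfront : ∀ y ∈ frontier U, max M 1 + |R| ≤ ‖F n y - d n‖ := fun y hy => by
    linarith [hn y hy, norm_sub_norm_le (F n y) (d n), hR _ (hdB n), le_abs_self R]
  have hmin := le_norm_of_forall_mem_frontier_le_norm hU ((hF n).sub_const (d n))
    (fun y hy => sub_ne_zero.2 (hd n y hy)) hC hfront hz
  linarith [norm_sub_le (F n z) (d n), hR _ (hdB n), le_max_left M 1, le_abs_self R]

end MaximumPrinciple

def CauchyOrDivergentOn (F : ℕ → ℂ → ℂ) (s : Set ℂ) : Prop :=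
  UniformCauchySeqOn F atTop s ∨ TendstoUniformlyOnInfty F atTop s

lemma CauchyOrDivergentOn.comp_strictMono {F : ℕ → ℂ → ℂ} {s : Set ℂ} {φ : ℕ → ℕ}
    (h : CauchyOrDivergentOn F s) (hφ : StrictMono φ) : CauchyOrDivergentOn (F ∘ φ) s :=
  h.imp (·.comp_tendsto hφ.tendsto_atTop) (·.comp_tendsto hφ.tendsto_atTop)

section Normality

variable {D : Set ℂ} {𝓕 : Set (ℂ → ℂ)}

lemma normalAt_of_notMem_juliaSet {z : ℂ} (hz : z ∈ D) (h : z ∉ JuliaSet D 𝓕) :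
    NormalAt D 𝓕 z :=
  by_contra fun hn => h ⟨hz, fun hF => hn hF.2⟩

lemma NormalAt.exists_closedBall {x : ℂ} (h : NormalAt D 𝓕 x) :
    ∃ r > 0, ∀ f : ℕ → ℂ → ℂ, (∀ n, f n ∈ 𝓕) →
      ∃ φ : ℕ → ℕ, StrictMono φ ∧ CauchyOrDivergentOn (f ∘ φ) (closedBall x r) := by
  obtain ⟨N, -, hN, hnormal⟩ := h
  obtain ⟨r, hr, hrN⟩ := nhds_basis_closedBall.mem_iff.1 hN
  refine ⟨r, hr, fun f hf => ?_⟩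
  obtain ⟨φ, hφ, ⟨g, -, hg⟩ | hinf⟩ := hnormal f hf
  · refine ⟨φ, hφ, .inl ?_⟩
    exact ((tendstoLocallyUniformlyOn_iff_tendstoUniformlyOn_of_compact
      (isCompact_closedBall x r)).1 (hg.mono hrN)).uniformCauchySeqOn
  · exact ⟨φ, hφ, .inr fun M => hinf _ hrN (isCompact_closedBall x r) M⟩

lemma exists_strictMono_cauchyOrDivergentOn {S : Set ℂ} (hSc : IsCompact S)
    (hSp : IsPreconnected S) (hS : ∀ x ∈ S, NormalAt D 𝓕 x) (f : ℕ → ℂ → ℂ)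
    (hf : ∀ n, f n ∈ 𝓕) : ∃ φ : ℕ → ℕ, StrictMono φ ∧ CauchyOrDivergentOn (f ∘ φ) S := by
  classical
  choose! r hr hsub using fun x hx => (hS x hx).exists_closedBall
  obtain ⟨T, hTS, hcover⟩ :=
    hSc.elim_nhds_subcover (fun x => ball x (r x)) fun x hx => ball_mem_nhds x (hr x hx)
  obtain ⟨φ, hφ, hφT⟩ := exists_strictMono_forall_finset
    (fun x u => CauchyOrDivergentOn u (closedBall x (r x)))
    (fun _ _ _ hφ h => h.comp_strictMono hφ) T (fun x hx => hsub x (hTS x hx)) f hf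
  refine ⟨φ, hφ, ?_⟩
  set Tc := T.filter fun x => UniformCauchySeqOn (f ∘ φ) atTop (closedBall x (r x))
  set Td := T.filter fun x => TendstoUniformlyOnInfty (f ∘ φ) atTop (closedBall x (r x))
  have hdisj : Disjoint (⋃ x ∈ Tc, ball x (r x)) (⋃ y ∈ Td, ball y (r y)) := by
    simp only [disjoint_iUnion_left, disjoint_iUnion_right]
    intro y hy x hx
    exact (UniformCauchySeqOn.disjoint_of_tendstoUniformlyOnInfty (Finset.mem_filter.1 hx).2
      (Finset.mem_filter.1 hy).2).mono ball_subset_closedBall ball_subset_closedBall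
  have hcov : S ⊆ (⋃ x ∈ Tc, ball x (r x)) ∪ (⋃ y ∈ Td, ball y (r y)) := by
    intro z hz
    obtain ⟨x, hx, hzx⟩ := mem_iUnion₂.1 (hcover hz)
    rcases hφT x hx with h | h
    · exact .inl (mem_iUnion₂.2 ⟨x, Finset.mem_filter.2 ⟨hx, h⟩, hzx⟩)
    · exact .inr (mem_iUnion₂.2 ⟨x, Finset.mem_filter.2 ⟨hx, h⟩, hzx⟩)
  have hballs {T' : Finset ℂ} : (⋃ x ∈ T', ball x (r x)) ⊆ ⋃ x ∈ T', closedBall x (r x) :=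
    biUnion_mono subset_rfl fun _ _ => ball_subset_closedBall
  rcases hSp.subset_or_subset (isOpen_biUnion fun _ _ => isOpen_ball)
    (isOpen_biUnion fun _ _ => isOpen_ball) hdisj hcov with hS_cauchy | hS_div
  · exact .inl ((uniformCauchySeqOn_biUnion fun x hx => (Finset.mem_filter.1 hx).2).mono
      (hS_cauchy.trans hballs))
  · exact .inr ((tendstoUniformlyOnInfty_biUnion fun x hx => (Finset.mem_filter.1 hx).2).mono
      (hS_div.trans hballs))

lemma normalAt_of_forall_mem_sphere {a : ℂ} {r : ℝ} {B : Set ℂ} (hr : 0 < r)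
    (hD : ball a r ⊆ D) (hdiff : ∀ f ∈ 𝓕, Differentiable ℂ f) (hB : IsBounded B)
    (homit : ∀ f ∈ 𝓕, ∃ d ∈ B, ∀ z ∈ closedBall a r, f z ≠ d)
    (hS : ∀ z ∈ sphere a r, NormalAt D 𝓕 z) : NormalAt D 𝓕 a := by
  refine ⟨ball a r, hD, ball_mem_nhds a hr, fun f hf => ?_⟩
  have hsphere : IsPreconnected (sphere a r) :=
    isPreconnected_sphere (by rw [Complex.rank_real_complex]; norm_num) a r
  obtain ⟨φ, hφ, hcd⟩ :=
    exists_strictMono_cauchyOrDivergentOn (isCompact_sphere a r) hsphere hS f hf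
  have hF n : DiffContOnCl ℂ (f (φ n)) (ball a r) := (hdiff _ (hf _)).diffContOnCl
  refine ⟨φ, hφ, ?_⟩
  rw [← frontier_ball a hr.ne'] at hcd
  rcases hcd with hc | hd
  · obtain ⟨g, hg⟩ := (hc.closure_of_frontier isBounded_ball hF).exists_tendstoUniformlyOn
    have hg' := hg.tendstoLocallyUniformlyOn.mono subset_closure
    exact .inl ⟨g, hg'.differentiableOn
      (.of_forall fun n => (hdiff _ (hf _)).differentiableOn) isOpen_ball, hg'⟩
  · rw [← closure_ball a hr.ne'] at homit
    have hd' := hd.closure_of_frontier isBounded_ball hF hB fun n => homit _ (hf (φ n))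
    exact .inr fun K hK _ => hd'.mono (hK.trans subset_closure)

end Normality

/-- Let `𝓕` be a family of transcendental entire functions whose Julia
like set is nonempty and backward invariant. Then `J(𝓕)` is a singleton or infinite. -/
theorem julia_singleton_or_infinite (𝓕 : Set (ℂ → ℂ))
    (htra : ∀ f ∈ 𝓕, TranscendentalEntire f)
    (hne : (JuliaSet Set.univ 𝓕).Nonempty)
    (hback : ∀ f ∈ 𝓕, f ⁻¹' JuliaSet Set.univ 𝓕 ⊆ JuliaSet Set.univ 𝓕) :
    (∃ z₀ : ℂ, JuliaSet Set.univ 𝓕 = {z₀}) ∨ (JuliaSet Set.univ 𝓕).Infinite := by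
  set J := JuliaSet univ 𝓕
  refine hne.exists_eq_singleton_or_nontrivial.imp id fun hJ hfin => ?_
  obtain ⟨a, ha⟩ := hne
  have hiso_nhds : (J \ {a})ᶜ ∈ 𝓝 a := hfin.sdiff.isClosed.isOpen_compl.mem_nhds (by simp)
  obtain ⟨r, hr, hiso⟩ := nhds_basis_closedBall.mem_iff.1 hiso_nhds
  have hJa : ∀ z ∈ closedBall a r, z ∈ J → z = a :=
    fun z hz hzJ => by_contra fun hza => hiso hz ⟨hzJ, hza⟩
  have hsphere : ∀ z ∈ sphere a r, NormalAt univ 𝓕 z := fun z hz =>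
    normalAt_of_notMem_juliaSet (mem_univ z) fun hzJ =>
      ne_of_mem_sphere hz hr.ne' (hJa z (sphere_subset_closedBall hz) hzJ)
  have homit : ∀ f ∈ 𝓕, ∃ d ∈ J, ∀ z ∈ closedBall a r, f z ≠ d := by
    intro f hf
    obtain ⟨d, hdJ, hd⟩ := hJ.exists_ne (f a)
    refine ⟨d, hdJ, fun z hz hzd => hd ?_⟩
    rw [← hzd, hJa z hz (hback f hf (by rwa [mem_preimage, hzd]))]
  exact ha.2 ⟨mem_univ a, normalAt_of_forall_mem_sphere hr (subset_univ _)
    (fun f hf => (htra f hf).1) hfin.isBounded homit hsphere⟩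
end

section
/- Let 𝓕 be a family of holomorphic functions on a simply connected domain D ⊆ ℂ. Then the Julia like set J(𝓕) is connected if and only if the boundary (relative to D) of every connected component of the Fatou like set F(𝓕) is connected. -/
open Filter Topology Set

/-!
The Fatou set `F` is an open subset of `D`; write `J = D \ F`. If `J` is connected and `U` is a
component of `F`, then `D ∩ closure U` and `D \ U` are connected (the latter is `J` together
with the closures in `D` of the other components, each of which meets `J`), they cover `D`, and
they intersect in the boundary of `U` relative to `D`. A simply connected domain is unicoherent,
so this intersection is connected: were it split by closed sets `P`, `Q`, an Urysohn function
`g` separating them would make `exp (iπg)` on one piece and `exp (-iπg)` on the other a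
continuous circle-valued map, and its real lift `θ` would satisfy both `θ - πg` and `θ + πg`
constant, which is impossible between a point of `P` and a point of `Q`.

Conversely, if `J` is split by open sets `u`, `v`, the connected boundary of each component of
`F` lies on one side; adding each component to the side of its boundary splits `D` into two
disjoint open sets.
-/

theorem ContinuousMap.exists_circleExp_lift {X : Type*} [TopologicalSpace X]
    [SimplyConnectedSpace X] [LocallyPathConnectedSpace X] (f : C(X, Circle)) :
    ∃ θ : C(X, ℝ), ∀ x, Circle.exp (θ x) = f x := by
  obtain ⟨x₀⟩ := (inferInstance : Nonempty X)
  obtain ⟨t₀, ht₀⟩ := Circle.exp_surjective (f x₀)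
  obtain ⟨θ, ⟨-, hθ⟩, -⟩ :=
    Circle.isCoveringMap_exp.existsUnique_continuousMap_lifts f x₀ t₀ ht₀
  exact ⟨θ, congrFun hθ⟩

theorem IsPreconnected.constant_of_circleExp_eq_one {X : Type*} [TopologicalSpace X] {S : Set X}
    (hS : IsPreconnected S) {θ : X → ℝ} (hθ : ContinuousOn θ S)
    (h : ∀ x ∈ S, Circle.exp (θ x) = 1) {x y : X} (hx : x ∈ S) (hy : y ∈ S) : θ x = θ y := by
  refine hS.constant_of_mapsTo (T := AddSubgroup.zmultiples (2 * Real.pi))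
    (isDiscrete_iff_discreteTopology.2
      (inferInstanceAs (DiscreteTopology (AddSubgroup.zmultiples (2 * Real.pi))))) hθ
    (fun z hz => ?_) hx hy
  obtain ⟨n, hn⟩ := Circle.exp_eq_one.1 (h z hz)
  exact ⟨n, by simp [hn]⟩

open Real in
theorem IsClosed.isPreconnected_inter_of_union_eq_univ {X : Type*} [TopologicalSpace X]
    [NormalSpace X] [SimplyConnectedSpace X] [LocallyPathConnectedSpace X] {A B : Set X}
    (hA : IsClosed A) (hB : IsClosed B) (hAc : IsPreconnected A) (hBc : IsPreconnected B)
    (hAB : A ∪ B = univ) : IsPreconnected (A ∩ B) := by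
  classical
  rw [isPreconnected_iff_subset_of_fully_disjoint_closed (hA.inter hB)]
  intro P Q hP hQ hcov hPQ
  by_contra! hne
  obtain ⟨q, hq, hqP⟩ := not_subset.1 hne.1
  obtain ⟨p, hp, hpQ⟩ := not_subset.1 hne.2
  obtain ⟨g, hg₀, hg₁, -⟩ := exists_continuous_zero_one_of_isClosed hP hQ hPQ
  have hgp : g p = 0 := hg₀ ((hcov hp).resolve_right hpQ)
  have hgq : g q = 1 := hg₁ ((hcov hq).resolve_left hqP)
  -- `g` takes only the values `0` and `1` on `A ∩ B`, where `exp (iπg) = exp (-iπg)`.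
  have hagree : ∀ x ∈ A ∩ B, Circle.exp (π * g x) = Circle.exp (-(π * g x)) := by
    intro x hx
    rcases hcov hx with hxP | hxQ
    · simp [hg₀ hxP]
    · exact Circle.exp_eq_exp.2 ⟨1, by simp [hg₁ hxQ]; ring⟩
  have hfr : frontier A ⊆ A ∩ B := fun x hx => ⟨hA.frontier_subset hx,
    hB.closure_subset_iff.2 (compl_subset_iff_union.2 hAB)
      (frontier_subset_closure ((frontier_compl A).symm ▸ hx))⟩
  let f : C(X, Circle) :=
    ⟨A.piecewise (fun x => Circle.exp (π * g x)) (fun x => Circle.exp (-(π * g x))),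
      Continuous.piecewise (fun x hx => hagree x (hfr hx)) (by fun_prop) (by fun_prop)⟩
  have hfA : ∀ x ∈ A, f x = Circle.exp (π * g x) := fun x hx => by
    simp only [f, ContinuousMap.coe_mk, piecewise_eq_of_mem _ _ _ hx]
  have hfB : ∀ x ∈ B, f x = Circle.exp (-(π * g x)) := fun x hx => by
    by_cases hxA : x ∈ A
    · exact (hfA x hxA).trans (hagree x ⟨hxA, hx⟩)
    · simp only [f, ContinuousMap.coe_mk, piecewise_eq_of_notMem _ _ _ hxA]
  obtain ⟨θ, hθ⟩ := f.exists_circleExp_lift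
  have hA_const : θ p - π * g p = θ q - π * g q :=
    hAc.constant_of_circleExp_eq_one (θ := fun x => θ x - π * g x) (by fun_prop)
      (fun x hx => by simp [Circle.exp_sub, hθ, hfA x hx]) hp.1 hq.1
  have hB_const : θ p + π * g p = θ q + π * g q :=
    hBc.constant_of_circleExp_eq_one (θ := fun x => θ x + π * g x) (by fun_prop)
      (fun x hx => by simp [Circle.exp_add, hθ, hfB x hx]) hp.2 hq.2
  rw [hgp, hgq] at hA_const hB_const
  linarith [pi_pos]

theorem IsOpen.isPreconnected_inter_of_simplyConnectedSpace {E : Type*} [NormedAddCommGroup E]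
    [NormedSpace ℝ E] {D K₁ K₂ : Set E} (hD : IsOpen D) [SimplyConnectedSpace D]
    (hK₁ : IsClosed K₁) (hK₂ : IsClosed K₂) (hcov : D ⊆ K₁ ∪ K₂)
    (h₁ : IsPreconnected (D ∩ K₁)) (h₂ : IsPreconnected (D ∩ K₂)) :
    IsPreconnected (D ∩ (K₁ ∩ K₂)) := by
  have := hD.locallyPathConnectedSpace
  have hpre : ∀ {K : Set E}, IsPreconnected (D ∩ K) → IsPreconnected ((↑) ⁻¹' K : Set D) :=
    fun h => IsInducing.subtypeVal.isPreconnected_image.1 (Subtype.image_preimage_coe D _ ▸ h)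
  rw [← Subtype.image_preimage_coe]
  refine (IsClosed.isPreconnected_inter_of_union_eq_univ (hK₁.preimage continuous_subtype_val)
    (hK₂.preimage continuous_subtype_val) (hpre h₁) (hpre h₂) ?_).image _
    continuous_subtype_val.continuousOn
  exact eq_univ_of_forall fun x => hcov x.2

theorem IsPreconnected.inter_frontier_nonempty {X : Type*} [TopologicalSpace X] {s t : Set X}
    (hs : IsPreconnected s) (h₁ : (s ∩ t).Nonempty) (h₂ : (s \ t).Nonempty) :
    (s ∩ frontier t).Nonempty := by
  by_contra h
  have hsub : s ⊆ interior t ∪ (closure t)ᶜ := fun x hx => by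
    by_cases hxc : x ∈ closure t
    · exact .inl (by_contra fun hxi => h ⟨x, hx, hxc, hxi⟩)
    · exact .inr hxc
  obtain ⟨x, hxs, hxt⟩ := h₁
  obtain ⟨y, hys, hyt⟩ := h₂
  obtain ⟨z, -, hzi, hzc⟩ := hs _ _ isOpen_interior isClosed_closure.isOpen_compl hsub
    ⟨x, hxs, (hsub hxs).resolve_right (· (subset_closure hxt))⟩
    ⟨y, hys, (hsub hys).resolve_left (hyt <| interior_subset ·)⟩
  exact hzc (subset_closure (interior_subset hzi))

theorem IsPreconnected.subset_left_of_subset_union_of_inter_eq_empty {X : Type*}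
    [TopologicalSpace X] {s u v : Set X} (hs : IsPreconnected s) (hu : IsOpen u) (hv : IsOpen v)
    (hsuv : s ⊆ u ∪ v) (huv : s ∩ (u ∩ v) = ∅) (hsu : (s ∩ u).Nonempty) : s ⊆ u := by
  refine (isPreconnected_iff_subset_of_disjoint.1 hs u v hu hv hsuv huv).resolve_right
    fun hsv => ?_
  obtain ⟨x, hxs, hxu⟩ := hsu
  exact huv.subset ⟨hxs, hxu, hsv hxs⟩

section ConnectedComponentIn

variable {X : Type*} [TopologicalSpace X] {D F : Set X}

theorem disjoint_connectedComponentIn {x y : X}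
    (h : connectedComponentIn F x ≠ connectedComponentIn F y) :
    Disjoint (connectedComponentIn F x) (connectedComponentIn F y) :=
  disjoint_left.2 fun _ hx hy =>
    h ((connectedComponentIn_eq hx).trans (connectedComponentIn_eq hy).symm)

theorem inter_frontier_connectedComponentIn_nonempty (hD : IsPreconnected D)
    (hFD : F ⊆ D) (hJ : (D \ F).Nonempty) {x : X} (hx : x ∈ F) :
    (D ∩ frontier (connectedComponentIn F x)).Nonempty := by
  obtain ⟨j, hjD, hjF⟩ := hJ
  exact hD.inter_frontier_nonempty ⟨x, hFD hx, mem_connectedComponentIn hx⟩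
    ⟨j, hjD, fun hj => hjF (connectedComponentIn_subset F x hj)⟩

variable [LocallyConnectedSpace X]

theorem IsOpen.disjoint_closure_connectedComponentIn (hF : IsOpen F) {x y : X}
    (h : connectedComponentIn F x ≠ connectedComponentIn F y) :
    Disjoint (closure (connectedComponentIn F x)) (connectedComponentIn F y) :=
  (disjoint_connectedComponentIn h).closure_left hF.connectedComponentIn

theorem IsOpen.disjoint_frontier_connectedComponentIn (hF : IsOpen F) (x : X) :
    Disjoint (frontier (connectedComponentIn F x)) F := by
  refine disjoint_right.2 fun y hyF hy => ?_
  rw [hF.connectedComponentIn.frontier_eq] at hy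
  have hne : connectedComponentIn F x ≠ connectedComponentIn F y :=
    fun h => hy.2 (h ▸ mem_connectedComponentIn hyF)
  exact disjoint_left.1 (hF.disjoint_closure_connectedComponentIn hne) hy.1
    (mem_connectedComponentIn hyF)

theorem IsOpen.inter_frontier_connectedComponentIn_subset (hF : IsOpen F) (x : X) :
    D ∩ frontier (connectedComponentIn F x) ⊆ D \ F := fun _ hy =>
  ⟨hy.1, disjoint_left.1 (hF.disjoint_frontier_connectedComponentIn x) hy.2⟩

theorem isPreconnected_diff_union_inter_closure_connectedComponentIn (hD : IsPreconnected D)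
    (hF : IsOpen F) (hFD : F ⊆ D) (hJ : IsPreconnected (D \ F)) (hJne : (D \ F).Nonempty)
    {x : X} (hx : x ∈ F) :
    IsPreconnected (D \ F ∪ D ∩ closure (connectedComponentIn F x)) := by
  obtain ⟨y, hyD, hyfr⟩ := inter_frontier_connectedComponentIn_nonempty hD hFD hJne hx
  refine hJ.union' ⟨y, hF.inter_frontier_connectedComponentIn_subset x ⟨hyD, hyfr⟩,
    hyD, frontier_subset_closure hyfr⟩ ?_
  exact isPreconnected_connectedComponentIn.subset_closure
    (fun z hz => ⟨hFD (connectedComponentIn_subset F x hz), subset_closure hz⟩)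
    inter_subset_right

theorem isPreconnected_diff_connectedComponentIn (hD : IsPreconnected D) (hF : IsOpen F)
    (hFD : F ⊆ D) (hJ : IsPreconnected (D \ F)) (x : X) :
    IsPreconnected (D \ connectedComponentIn F x) := by
  rcases em' (x ∈ F) with hx | hx
  · rwa [connectedComponentIn_eq_empty hx, sdiff_empty]
  obtain hJe | ⟨j, hj⟩ := (D \ F).eq_empty_or_nonempty
  · obtain rfl : F = D := hFD.antisymm (sdiff_eq_empty.1 hJe)
    rw [hD.connectedComponentIn hx, sdiff_self]
    exact isPreconnected_empty
  refine isPreconnected_of_forall j fun y hy => ?_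
  have hJU : D \ F ⊆ D \ connectedComponentIn F x :=
    sdiff_subset_sdiff_right (connectedComponentIn_subset F x)
  rcases em' (y ∈ F) with hyF | hyF
  · exact ⟨D \ F, hJU, hj, ⟨hy.1, hyF⟩, hJ⟩
  have hne : connectedComponentIn F y ≠ connectedComponentIn F x :=
    fun h => hy.2 (h ▸ mem_connectedComponentIn hyF)
  refine ⟨D \ F ∪ D ∩ closure (connectedComponentIn F y), union_subset hJU
    fun z hz => ⟨hz.1, disjoint_left.1 (hF.disjoint_closure_connectedComponentIn hne) hz.2⟩,
    .inl hj, .inr ⟨hy.1, subset_closure (mem_connectedComponentIn hyF)⟩,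
    isPreconnected_diff_union_inter_closure_connectedComponentIn hD hF hFD hJ ⟨j, hj⟩ hyF⟩

theorem IsOpen.isOpen_diff_inter_union_setOf_frontier_subset (hD : IsOpen D) (hF : IsOpen F)
    {u : Set X} (hu : IsOpen u)
    (hsat : ∀ x ∈ F, (D ∩ frontier (connectedComponentIn F x) ∩ u).Nonempty →
      D ∩ frontier (connectedComponentIn F x) ⊆ u) :
    IsOpen ((D \ F) ∩ u ∪ {x | x ∈ F ∧ D ∩ frontier (connectedComponentIn F x) ⊆ u}) := by
  rw [isOpen_iff_mem_nhds]
  rintro z (⟨⟨hzD, hzF⟩, hzu⟩ | ⟨hzF, hzsub⟩)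
  · filter_upwards [(hD.inter hu).connectedComponentIn.mem_nhds
      (mem_connectedComponentIn ⟨hzD, hzu⟩)] with w hw
    have hwDu := connectedComponentIn_subset _ _ hw
    by_cases hwF : w ∈ F
    · -- the component of `w` reaches into the connected neighbourhood of `z ∉ F`,
      -- so its boundary does too
      obtain ⟨y, hyN, hyfr⟩ :=
        isPreconnected_connectedComponentIn.inter_frontier_nonempty
          ⟨w, hw, mem_connectedComponentIn hwF⟩
          ⟨z, mem_connectedComponentIn ⟨hzD, hzu⟩,
            fun hz => hzF (connectedComponentIn_subset F w hz)⟩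
      have hyDu := connectedComponentIn_subset _ _ hyN
      exact .inr ⟨hwF, hsat w hwF ⟨y, ⟨hyDu.1, hyfr⟩, hyDu.2⟩⟩
    · exact .inl ⟨⟨hwDu.1, hwF⟩, hwDu.2⟩
  · filter_upwards [hF.connectedComponentIn.mem_nhds (mem_connectedComponentIn hzF)] with w hw
    exact .inr ⟨connectedComponentIn_subset F z hw, connectedComponentIn_eq hw ▸ hzsub⟩

theorem isPreconnected_diff_of_forall_isPreconnected_inter_frontier (hD : IsOpen D)
    (hDc : IsPreconnected D) (hF : IsOpen F) (hFD : F ⊆ D)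
    (h : ∀ x ∈ F, IsPreconnected (D ∩ frontier (connectedComponentIn F x))) :
    IsPreconnected (D \ F) := by
  rintro u v hu hv hJuv ⟨a, haJ, hau⟩ ⟨b, hbJ, hbv⟩
  by_contra hJ
  rw [not_nonempty_iff_eq_empty] at hJ
  have hbd := hF.inter_frontier_connectedComponentIn_subset (D := D)
  have hsat {u v : Set X} (hu : IsOpen u) (hv : IsOpen v) (hJuv : D \ F ⊆ u ∪ v)
      (hJ : (D \ F) ∩ (u ∩ v) = ∅) (x : X) (hx : x ∈ F)
      (hxu : (D ∩ frontier (connectedComponentIn F x) ∩ u).Nonempty) :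
      D ∩ frontier (connectedComponentIn F x) ⊆ u :=
    (h x hx).subset_left_of_subset_union_of_inter_eq_empty hu hv ((hbd x).trans hJuv)
      (subset_empty_iff.1 (hJ ▸ inter_subset_inter_left _ (hbd x))) hxu
  have hsat_u := hsat hu hv hJuv hJ
  have hsat_v := hsat hv hu (union_comm u v ▸ hJuv) (inter_comm u v ▸ hJ)
  obtain ⟨y, hyD, hyu, hyv⟩ := hDc _ _
    (hD.isOpen_diff_inter_union_setOf_frontier_subset hF hu hsat_u)
    (hD.isOpen_diff_inter_union_setOf_frontier_subset hF hv hsat_v)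
    (fun z hzD => by
      by_cases hzF : z ∈ F
      · obtain ⟨w, hw⟩ := inter_frontier_connectedComponentIn_nonempty hDc hFD ⟨a, haJ⟩ hzF
        rcases hJuv (hbd z hw) with hwu | hwv
        · exact .inl (.inr ⟨hzF, hsat_u z hzF ⟨w, hw, hwu⟩⟩)
        · exact .inr (.inr ⟨hzF, hsat_v z hzF ⟨w, hw, hwv⟩⟩)
      · exact (hJuv ⟨hzD, hzF⟩).imp (.inl ⟨⟨hzD, hzF⟩, ·⟩) (.inl ⟨⟨hzD, hzF⟩, ·⟩))
    ⟨a, haJ.1, .inl ⟨haJ, hau⟩⟩ ⟨b, hbJ.1, .inl ⟨hbJ, hbv⟩⟩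
  rcases hyu with ⟨hyJ, hyu⟩ | ⟨hyF, hyu⟩ <;> rcases hyv with ⟨hyJ', hyv⟩ | ⟨hyF', hyv⟩
  · exact hJ.subset ⟨hyJ, hyu, hyv⟩
  · exact hyJ.2 hyF'
  · exact hyJ'.2 hyF
  · obtain ⟨w, hw⟩ := inter_frontier_connectedComponentIn_nonempty hDc hFD ⟨a, haJ⟩ hyF
    exact hJ.subset ⟨hbd y hw, hyu hw, hyv hw⟩

end ConnectedComponentIn

theorem IsOpen.isPreconnected_inter_frontier_connectedComponentIn {E : Type*}
    [NormedAddCommGroup E] [NormedSpace ℝ E] {D F : Set E} (hD : IsOpen D)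
    [SimplyConnectedSpace D] (hDc : IsPreconnected D) (hF : IsOpen F) (hFD : F ⊆ D)
    (hJ : IsPreconnected (D \ F)) (x : E) :
    IsPreconnected (D ∩ frontier (connectedComponentIn F x)) := by
  have hU : IsOpen (connectedComponentIn F x) := hF.connectedComponentIn
  rw [hU.frontier_eq, sdiff_eq]
  refine hD.isPreconnected_inter_of_simplyConnectedSpace isClosed_closure hU.isClosed_compl
    (fun z _ => (em (z ∈ connectedComponentIn F x)).imp (subset_closure ·) id) ?_
    (isPreconnected_diff_connectedComponentIn hDc hF hFD hJ x)
  exact isPreconnected_connectedComponentIn.subset_closure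
    (fun z hz => ⟨hFD (connectedComponentIn_subset F x hz), subset_closure hz⟩)
    inter_subset_right

theorem isOpen_fatouSet (D : Set ℂ) (𝓕 : Set (ℂ → ℂ)) : IsOpen (FatouSet D 𝓕) := by
  rw [isOpen_iff_mem_nhds]
  rintro z ⟨-, N, hND, hN, hnormal⟩
  filter_upwards [interior_mem_nhds.2 hN] with w hw
  exact ⟨hND (interior_subset hw), N, hND, mem_interior_iff_mem_nhds.1 hw, hnormal⟩

theorem julia_connected_iff_fatou_components_boundary_connected_general
    (D : Set ℂ) (hD : IsOpen D) (hDconn : IsConnected D)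
    (hsc : SimplyConnectedSpace D)
    (𝓕 : Set (ℂ → ℂ)) :
    IsPreconnected (JuliaSet D 𝓕) ↔
      ∀ x ∈ FatouSet D 𝓕,
        IsPreconnected (relBoundary D (connectedComponentIn (FatouSet D 𝓕) x)) := by
  have hF : IsOpen (FatouSet D 𝓕) := isOpen_fatouSet D 𝓕
  have hFD : FatouSet D 𝓕 ⊆ D := fun _ hz => hz.1
  exact ⟨fun hJ x _ => hD.isPreconnected_inter_frontier_connectedComponentIn
      hDconn.isPreconnected hF hFD hJ x,
    isPreconnected_diff_of_forall_isPreconnected_inter_frontier hD hDconn.isPreconnected hF hFD⟩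

/-- For a family `𝓕` of holomorphic functions on a simply connected
domain `D`, the Julia like set `J(𝓕)` is connected if and only if the boundary (relative
to `D`) of every connected component of the Fatou like set `F(𝓕)` is connected. -/
theorem julia_connected_iff_fatou_components_boundary_connected
    (D : Set ℂ) (hD : IsOpen D) (hDconn : IsConnected D)
    (hsc : SimplyConnectedSpace D)
    (𝓕 : Set (ℂ → ℂ)) (hol : ∀ f ∈ 𝓕, DifferentiableOn ℂ f D) :
    IsPreconnected (JuliaSet D 𝓕) ↔
      ∀ x ∈ FatouSet D 𝓕,
        IsPreconnected (relBoundary D (connectedComponentIn (FatouSet D 𝓕) x)) :=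
  julia_connected_iff_fatou_components_boundary_connected_general D hD hDconn hsc 𝓕
end

section
/- Let 𝓕 be a family of holomorphic functions on a domain D ⊆ ℂ. Then the boundary of the escaping like set I(𝓕) relative to D is contained in the Julia like set: ∂I(𝓕) ⊆ J(𝓕). -/
/-
Near a point of normality every sequence of `𝓕` has a subsequence converging locally uniformly
either to a finite limit or to `∞`. A nearby escaping point rules out the finite limit for
injective sequences, and a nearby non-escaping point yields an injective sequence bounded there,
which rules out `∞`. So the normality neighbourhood lies entirely inside `I(𝓕)` or entirely
outside it, and no point of `∂I(𝓕)` is a point of normality.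
-/

open Filter Topology Set

variable {D : Set ℂ} {𝓕 : Set (ℂ → ℂ)}

lemma TendstoLocallyUniformlyOnInfty.tendsto_norm_atTop {F : ℕ → ℂ → ℂ} {s : Set ℂ}
    (h : TendstoLocallyUniformlyOnInfty F s) {b : ℂ} (hb : b ∈ s) :
    Tendsto (fun n => ‖F n b‖) atTop atTop :=
  tendsto_atTop.2 fun M =>
    (h {b} (singleton_subset_iff.2 hb) isCompact_singleton M).mono fun _ hn => hn b rfl

lemma exists_injective_bounded_of_notMem_escapingSet {b : ℂ} (hbD : b ∈ D)
    (hb : b ∉ EscapingSet D 𝓕) :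
    ∃ g : ℕ → ℂ → ℂ, (∀ n, g n ∈ 𝓕) ∧ Function.Injective g ∧ ∃ M, ∀ n, ‖g n b‖ < M := by
  obtain ⟨f, hf𝓕, hfinj, hfb⟩ : ∃ f : ℕ → ℂ → ℂ, (∀ n, f n ∈ 𝓕) ∧ Function.Injective f ∧
      ¬ Tendsto (fun n => ‖f n b‖) atTop atTop := by
    simpa [EscapingSet, hbD] using hb
  obtain ⟨M, hM⟩ : ∃ M, ∃ᶠ n in atTop, ‖f n b‖ < M := by
    simpa [tendsto_atTop, frequently_atTop] using hfb
  obtain ⟨ψ, hψ, hψM⟩ := extraction_of_frequently_atTop hM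
  exact ⟨f ∘ ψ, fun n => hf𝓕 _, hfinj.comp hψ.injective, M, hψM⟩

lemma NormalAt.escapingSet_mem_nhds_or_compl_mem_nhds {z : ℂ} (h : NormalAt D 𝓕 z) :
    EscapingSet D 𝓕 ∈ 𝓝 z ∨ (EscapingSet D 𝓕)ᶜ ∈ 𝓝 z := by
  obtain ⟨N, hND, hNz, hnorm⟩ := h
  rcases (N ∩ EscapingSet D 𝓕).eq_empty_or_nonempty with hempty | ⟨a, haN, haI⟩
  · exact .inr (mem_of_superset hNz fun b hbN hbI => hempty.subset ⟨hbN, hbI⟩)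
  refine .inl (mem_of_superset hNz fun b hbN => by_contra fun hbI => ?_)
  obtain ⟨g, hg𝓕, hginj, M, hM⟩ := exists_injective_bounded_of_notMem_escapingSet (hND hbN) hbI
  obtain ⟨φ, hφ, ⟨G, -, hG⟩ | hinf⟩ := hnorm g hg𝓕
  · exact not_tendsto_atTop_of_tendsto_nhds (hG.tendsto_at haN).norm
      (haI.2 _ (fun n => hg𝓕 _) (hginj.comp hφ.injective))
  · obtain ⟨n, hn⟩ := ((hinf.tendsto_norm_atTop hbN).eventually_ge_atTop M).exists
    exact (hM (φ n)).not_ge hn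

theorem relBoundary_escaping_subset_julia_general
    (D : Set ℂ)
    (𝓕 : Set (ℂ → ℂ)) :
    relBoundary D (EscapingSet D 𝓕) ⊆ JuliaSet D 𝓕 := by
  rintro z ⟨hzD, hzI⟩
  refine ⟨hzD, fun hzF => ?_⟩
  rcases hzF.2.escapingSet_mem_nhds_or_compl_mem_nhds with h | h
  · exact hzI.2 (mem_interior_iff_mem_nhds.2 h)
  · rw [← frontier_compl] at hzI
    exact hzI.2 (mem_interior_iff_mem_nhds.2 h)

/-- The boundary of the escaping like set `I(𝓕)` relative to `D` is
contained in the Julia like set `J(𝓕)`. -/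
theorem relBoundary_escaping_subset_julia
    (D : Set ℂ) (hD : IsOpen D) (hDconn : IsConnected D)
    (𝓕 : Set (ℂ → ℂ)) (hol : ∀ f ∈ 𝓕, DifferentiableOn ℂ f D) :
    relBoundary D (EscapingSet D 𝓕) ⊆ JuliaSet D 𝓕 :=
  relBoundary_escaping_subset_julia_general D 𝓕
end
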